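/- arXiv:1905.06151 — 7 statements merged into one kernel-verified Lean document; each statement's English description precedes it below -/
import Mathlib

section
/- For every prime p, A₂(p) = 2 + τ(p + 1), where τ denotes the number-of-divisors function. -/
/-!
Clearing denominators, `a/p = 1/m₁ + 1/m₂` becomes `a m₁ m₂ = p (m₁ + m₂)`.
If `p ∤ m₁ m₂` then `p ∣ a`, and `(a/p) m₁ m₂ = m₁ + m₂` forces `m₁ = m₂` and `a ∈ {p, 2p}`.
If `p ∣ m₁`, say `m₁ = p t`, then `(a t - 1) m₂ = p t` with `a t - 1` coprime to `t`, so
`a t - 1 ∣ p`, i.e. `a t ∈ {2, p + 1}`; either way `a ∈ {p} ∪ Div(p + 1)`.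
Conversely `p`, `2p` and every divisor `a` of `p + 1 = a t` occur, via
`1/2 + 1/2`, `1/1 + 1/1` and `1/(p t) + 1/t`, and these `2 + τ(p + 1)` values are distinct.
-/

/-- `A2 n` is the number of positive integers `a` such that `a/n` can be written as a
sum of two unit fractions. -/
noncomputable def A2 (n : ℕ) : ℕ :=
  Set.ncard {a : ℕ | 0 < a ∧ ∃ m1 m2 : ℕ, 0 < m1 ∧ 0 < m2 ∧
    (a : ℚ) / (n : ℚ) = 1 / (m1 : ℚ) + 1 / (m2 : ℚ)}

def IsTwoUnitFractionNumerator (n a : ℕ) : Prop :=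
  0 < a ∧ ∃ m1 m2 : ℕ, 0 < m1 ∧ 0 < m2 ∧ (a : ℚ) / (n : ℚ) = 1 / (m1 : ℚ) + 1 / (m2 : ℚ)

theorem A2_eq_ncard (n : ℕ) : A2 n = {a | IsTwoUnitFractionNumerator n a}.ncard := rfl

theorem isTwoUnitFractionNumerator_iff {n a : ℕ} (hn : 0 < n) :
    IsTwoUnitFractionNumerator n a ↔
      0 < a ∧ ∃ m1 m2 : ℕ, 0 < m1 ∧ 0 < m2 ∧ a * m1 * m2 = n * (m1 + m2) := by
  refine and_congr_right fun _ => exists₂_congr fun m1 m2 => and_congr_right fun hm1 =>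
    and_congr_right fun hm2 => ?_
  rw [div_add_div _ _ (by positivity) (by positivity), div_eq_div_iff (by positivity)
    (by positivity), ← Nat.cast_inj (R := ℚ)]
  push_cast
  constructor <;> intro h <;> linarith

theorem isTwoUnitFractionNumerator_self {n : ℕ} (hn : 0 < n) : IsTwoUnitFractionNumerator n n :=
  (isTwoUnitFractionNumerator_iff hn).2 ⟨hn, 2, 2, two_pos, two_pos, by ring⟩

theorem isTwoUnitFractionNumerator_two_mul {n : ℕ} (hn : 0 < n) :
    IsTwoUnitFractionNumerator n (2 * n) :=
  (isTwoUnitFractionNumerator_iff hn).2 ⟨by positivity, 1, 1, one_pos, one_pos, by ring⟩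

theorem isTwoUnitFractionNumerator_of_dvd_succ {n a : ℕ} (hn : 0 < n) (ha : a ∣ n + 1) :
    IsTwoUnitFractionNumerator n a := by
  obtain ⟨t, ht⟩ := ha
  have ht0 : 0 < t := Nat.pos_of_ne_zero (by rintro rfl; simp at ht)
  refine (isTwoUnitFractionNumerator_iff hn).2
    ⟨Nat.pos_of_ne_zero (by rintro rfl; simp at ht), n * t, t, by positivity, ht0, ?_⟩
  calc a * (n * t) * t = n * t * (a * t) := by ring
    _ = n * (n * t + t) := by rw [← ht]; ring

theorem Nat.dvd_of_mul_eq_mul_of_dvd_succ {d m n t : ℕ} (h : d * m = n * t) (ht : t ∣ d + 1) :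
    d ∣ n :=
  have hcop : d.Coprime t := Nat.Coprime.coprime_dvd_right ht (by simp)
  hcop.dvd_of_dvd_mul_right ⟨m, h.symm⟩

theorem Nat.dvd_two_of_mul_mul_eq_add {b m1 m2 : ℕ} (hm1 : 0 < m1) (h : b * m1 * m2 = m1 + m2) :
    b ∣ 2 := by
  have hm : m1 = m2 := Nat.dvd_antisymm
    ((Nat.dvd_add_right dvd_rfl).1 ⟨b * m2, by rw [← h]; ring⟩)
    ((Nat.dvd_add_left dvd_rfl).1 ⟨b * m1, by rw [← h]; ring⟩)
  subst hm
  exact ⟨m1, Nat.eq_of_mul_eq_mul_right hm1 (by rw [h]; ring)⟩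

section Prime

variable {p a m1 m2 : ℕ}

theorem eq_or_dvd_succ_of_dvd_left (hp : p.Prime) (hm2 : 0 < m2) (h : a * m1 * m2 = p * (m1 + m2))
    (hdvd : p ∣ m1) : a = p ∨ a ∣ p + 1 := by
  obtain ⟨t, rfl⟩ := hdvd
  have h' : a * t * m2 = p * t + m2 := Nat.eq_of_mul_eq_mul_left hp.pos (by rw [← h]; ring)
  obtain ⟨d, hd⟩ : ∃ d, a * t = d + 1 :=
    Nat.exists_eq_add_one.2 (Nat.pos_of_ne_zero fun h0 => by rw [h0] at h'; omega)
  have hdm : d * m2 = p * t := by rw [hd] at h'; linarith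
  rcases (Nat.dvd_prime hp).1 (Nat.dvd_of_mul_eq_mul_of_dvd_succ hdm ⟨a, by rw [← hd]; ring⟩)
    with rfl | rfl
  · rcases (Nat.dvd_prime Nat.prime_two).1 (⟨t, hd.symm⟩ : a ∣ 2) with rfl | rfl
    · exact Or.inr (one_dvd _)
    · rcases hp.eq_two_or_odd' with rfl | hodd
      · exact Or.inl rfl
      · exact Or.inr (even_iff_two_dvd.1 hodd.add_one)
  · exact Or.inr ⟨t, hd.symm⟩

theorem eq_or_eq_two_mul_or_dvd_succ (hp : p.Prime) (ha : 0 < a) (hm1 : 0 < m1) (hm2 : 0 < m2)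
    (h : a * m1 * m2 = p * (m1 + m2)) : a = p ∨ a = 2 * p ∨ a ∣ p + 1 := by
  by_cases h1 : p ∣ m1
  · exact (eq_or_dvd_succ_of_dvd_left hp hm2 h h1).imp_right Or.inr
  by_cases h2 : p ∣ m2
  · exact (eq_or_dvd_succ_of_dvd_left hp hm1 (by linarith) h2).imp_right Or.inr
  have hpa : p ∣ a := by
    have : p ∣ a * m1 * m2 := ⟨m1 + m2, h⟩
    simpa [hp.dvd_mul, h1, h2] using this
  obtain ⟨b, rfl⟩ := hpa
  have hb : b * m1 * m2 = m1 + m2 := Nat.eq_of_mul_eq_mul_left hp.pos (by rw [← h]; ring)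
  rcases (Nat.dvd_prime Nat.prime_two).1 (Nat.dvd_two_of_mul_mul_eq_add hm1 hb) with rfl | rfl
  · exact Or.inl (mul_one p)
  · exact Or.inr (Or.inl (mul_comm p 2))

theorem isTwoUnitFractionNumerator_prime_iff (hp : p.Prime) :
    IsTwoUnitFractionNumerator p a ↔ a ∈ insert p (insert (2 * p) (p + 1).divisors) := by
  simp only [Finset.mem_insert, Nat.mem_divisors, Nat.add_one_ne_zero, ne_eq, not_false_eq_true,
    and_true]
  constructor
  · rw [isTwoUnitFractionNumerator_iff hp.pos]
    rintro ⟨ha, m1, m2, hm1, hm2, h⟩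
    exact eq_or_eq_two_mul_or_dvd_succ hp ha hm1 hm2 h
  · rintro (rfl | rfl | h)
    · exact isTwoUnitFractionNumerator_self hp.pos
    · exact isTwoUnitFractionNumerator_two_mul hp.pos
    · exact isTwoUnitFractionNumerator_of_dvd_succ hp.pos h

end Prime

theorem Nat.card_insert_insert_two_mul_divisors_succ {n : ℕ} (hn : 1 < n) :
    (insert n (insert (2 * n) (n + 1).divisors)).card = 2 + (n + 1).divisors.card := by
  have h2n : 2 * n ∉ (n + 1).divisors := fun h =>
    absurd (Nat.le_of_dvd n.succ_pos (Nat.dvd_of_mem_divisors h)) (by omega)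
  have hn' : n ∉ insert (2 * n) (n + 1).divisors := by
    rw [Finset.mem_insert, not_or]
    refine ⟨by omega, fun h => ?_⟩
    have h1 : n ∣ 1 := (Nat.dvd_add_right dvd_rfl).1 (Nat.dvd_of_mem_divisors h)
    exact absurd (Nat.le_of_dvd one_pos h1) (by omega)
  rw [Finset.card_insert_of_notMem hn', Finset.card_insert_of_notMem h2n]
  omega

/-- For every prime `p`, `A₂(p) = 2 + τ(p+1)` where `τ` is the number-of-divisors
function. -/
theorem A2_prime (p : ℕ) (hp : p.Prime) :
    A2 p = 2 + (p + 1).divisors.card := by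
  have hset : {a | IsTwoUnitFractionNumerator p a} =
      ↑(insert p (insert (2 * p) (p + 1).divisors)) :=
    Set.ext fun _ => isTwoUnitFractionNumerator_prime_iff hp
  rw [A2_eq_ncard, hset, Set.ncard_coe_finset,
    Nat.card_insert_insert_two_mul_divisors_succ hp.one_lt]
end

section
/- Let p be a prime and let m be a positive integer with gcd(m, p) = 1. Suppose m/p = 1/m₁ + 1/m₂ + 1/m₃ for some positive integers m₁, m₂, m₃. Then either m ∈ {1, 2, 3}, or there exist positive integers a, b, c, u with gcd(a, b) = 1 and c dividing a + b such that m/p = 1/(abu) + 1/(pbcu) + 1/(pacu), or m/p = 1/(pabu) + 1/(bcu) + 1/(acu) (as rational numbers). -/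
private theorem cop_mul_add (a b : ℕ) (h : Nat.Coprime a b) : Nat.Coprime (a*b) (a+b) := by
  have ha : Nat.Coprime a (a+b) := by rw [Nat.add_comm]; exact (Nat.coprime_add_self_right).mpr h
  have hb : Nat.Coprime b (a+b) := (Nat.coprime_add_self_right).mpr h.symm
  exact Nat.Coprime.mul ha hb

private theorem caseA (p m x1 x2 x3 : ℕ) (hp : p.Prime)
    (hx1 : 0 < x1) (hx2 : 0 < x2) (hx3 : 0 < x3)
    (hd1 : p ∣ x1) (hnd2 : ¬ p ∣ x2) (hnd3 : ¬ p ∣ x3)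
    (key : m * (x1 * x2 * x3) = p * (x2 * x3 + x1 * x3 + x1 * x2)) :
    ∃ a b c u : ℕ, 0 < a ∧ 0 < b ∧ 0 < c ∧ 0 < u ∧ Nat.gcd a b = 1 ∧ c ∣ a + b ∧
      x1 = p * (a * b * u) ∧ x2 = b * c * u ∧ x3 = a * c * u := by
  obtain ⟨n1, rfl⟩ := hd1
  have hp0 : 0 < p := hp.pos
  have hpz : (p:ℤ) ≠ 0 := by exact_mod_cast hp0.ne'
  have hn1 : 0 < n1 := Nat.pos_of_ne_zero (by rintro rfl; simp at hx1)
  have kz : (m:ℤ) * ((p*n1) * x2 * x3) = p * (x2*x3 + (p*n1)*x3 + (p*n1)*x2) := by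
    exact_mod_cast key
  have Ez : (m:ℤ) * n1 * x2 * x3 = x2*x3 + p*n1*x3 + p*n1*x2 := by
    apply mul_left_cancel₀ hpz
    linear_combination kz
  set g := Nat.gcd x2 x3 with hgdef
  have hg : 0 < g := Nat.gcd_pos_of_pos_left _ hx2
  have hgz : (g:ℤ) ≠ 0 := by exact_mod_cast hg.ne'
  set b := x2 / g with hbdef
  set a := x3 / g with hadef
  have hb : g * b = x2 := Nat.mul_div_cancel' (Nat.gcd_dvd_left _ _)
  have ha : g * a = x3 := Nat.mul_div_cancel' (Nat.gcd_dvd_right _ _)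
  have hco : Nat.Coprime b a := Nat.coprime_div_gcd_div_gcd hg
  have hbpos : 0 < b := Nat.pos_of_ne_zero (by rintro h0; rw [h0] at hb; omega)
  have hapos : 0 < a := Nat.pos_of_ne_zero (by rintro h0; rw [h0] at ha; omega)
  have hpb : ¬ p ∣ b := fun hd => hnd2 (hb ▸ Dvd.dvd.mul_left hd _)
  have hpa : ¬ p ∣ a := fun hd => hnd3 (ha ▸ Dvd.dvd.mul_left hd _)
  have hpg : ¬ p ∣ g := fun hd => hnd2 (hb ▸ Dvd.dvd.mul_right hd _)
  have hbz : (g:ℤ) * b = x2 := by exact_mod_cast hb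
  have haz : (g:ℤ) * a = x3 := by exact_mod_cast ha
  rw [← hbz, ← haz] at Ez
  have E'z : (m:ℤ) * n1 * g * (a*b) = g * (a*b) + p * n1 * (a+b) := by
    apply mul_left_cancel₀ hgz
    linear_combination Ez
  have habd : a * b ∣ p * n1 * (a + b) := by
    have : ((a:ℤ) * b) ∣ (p:ℤ) * n1 * (a+b) := ⟨(m:ℤ)*n1*g - g, by linear_combination -E'z⟩
    exact_mod_cast this
  have habpn : a * b ∣ p * n1 :=
    Nat.Coprime.dvd_of_dvd_mul_right (cop_mul_add a b hco.symm) habd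
  have habn1 : a * b ∣ n1 := by
    have copabp : Nat.Coprime (a*b) p :=
      Nat.Coprime.mul (Nat.coprime_comm.mp ((hp.coprime_iff_not_dvd).mpr hpa))
        (Nat.coprime_comm.mp ((hp.coprime_iff_not_dvd).mpr hpb))
    exact Nat.Coprime.dvd_of_dvd_mul_left copabp habpn
  obtain ⟨w, hw⟩ := habn1
  have hwpos : 0 < w := Nat.pos_of_ne_zero (by rintro rfl; simp at hw; omega)
  have hwz : (n1:ℤ) = a*b*w := by exact_mod_cast hw
  rw [hwz] at E'z
  have habz : ((a:ℤ)*b) ≠ 0 := by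
    have : 0 < a*b := Nat.mul_pos hapos hbpos
    exact_mod_cast this.ne'
  have E2 : (m:ℤ) * w * g * (a*b) = g + p * w * (a+b) := by
    apply mul_left_cancel₀ habz
    linear_combination E'z
  have hwg : w ∣ g := by
    have : (w:ℤ) ∣ (g:ℤ) := ⟨(m:ℤ)*g*a*b - p*(a+b), by linear_combination -E2⟩
    exact_mod_cast this
  obtain ⟨c, hc⟩ := hwg
  have hcpos : 0 < c := Nat.pos_of_ne_zero (by rintro rfl; simp at hc; omega)
  have hcz : (g:ℤ) = w * c := by exact_mod_cast hc
  rw [hcz] at E2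
  have hwzne : (w:ℤ) ≠ 0 := by exact_mod_cast hwpos.ne'
  have E3 : (m:ℤ) * w * c * (a*b) = c + p * (a+b) := by
    apply mul_left_cancel₀ hwzne
    linear_combination E2
  have hcpab : c ∣ p * (a + b) := by
    have : (c:ℤ) ∣ (p:ℤ) * ((a:ℤ)+b) := ⟨(m:ℤ)*w*a*b - 1, by linear_combination -E3⟩
    exact_mod_cast this
  have hpc : ¬ p ∣ c := fun hd => hpg (hc ▸ Dvd.dvd.mul_left hd _)
  have hcab : c ∣ a + b :=
    Nat.Coprime.dvd_of_dvd_mul_left (Nat.coprime_comm.mp ((hp.coprime_iff_not_dvd).mpr hpc)) hcpab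
  exact ⟨a, b, c, w, hapos, hbpos, hcpos, hwpos, hco.symm, hcab, by rw [hw],
    by rw [← hb, hc]; ring, by rw [← ha, hc]; ring⟩

private theorem caseB (p m x1 x2 x3 : ℕ) (hp : p.Prime)
    (hx1 : 0 < x1) (hx2 : 0 < x2) (hx3 : 0 < x3)
    (hnd : ¬ p ∣ x1) (hd2 : p ∣ x2) (hd3 : p ∣ x3)
    (key : m * (x1 * x2 * x3) = p * (x2 * x3 + x1 * x3 + x1 * x2)) :
    ∃ a b c u : ℕ, 0 < a ∧ 0 < b ∧ 0 < c ∧ 0 < u ∧ Nat.gcd a b = 1 ∧ c ∣ a + b ∧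
      x1 = a * b * u ∧ x2 = p * (b * c * u) ∧ x3 = p * (a * c * u) := by
  obtain ⟨n2, rfl⟩ := hd2
  obtain ⟨n3, rfl⟩ := hd3
  have hp0 : 0 < p := hp.pos
  have hpz : (p:ℤ) ≠ 0 := by exact_mod_cast hp0.ne'
  have hn2 : 0 < n2 := Nat.pos_of_ne_zero (by rintro rfl; simp at hx2)
  have hn3 : 0 < n3 := Nat.pos_of_ne_zero (by rintro rfl; simp at hx3)
  have kz : (m:ℤ) * (x1 * (p*n2) * (p*n3)) = p * ((p*n2)*(p*n3) + x1*(p*n3) + x1*(p*n2)) := by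
    exact_mod_cast key
  have Ez : (m:ℤ) * x1 * n2 * n3 = p * (n2*n3) + x1*n3 + x1*n2 := by
    apply mul_left_cancel₀ (mul_ne_zero hpz hpz)
    linear_combination kz
  set g := Nat.gcd n2 n3 with hgdef
  have hg : 0 < g := Nat.gcd_pos_of_pos_left _ hn2
  have hgz : (g:ℤ) ≠ 0 := by exact_mod_cast hg.ne'
  set b := n2 / g with hbdef
  set a := n3 / g with hadef
  have hb : g * b = n2 := Nat.mul_div_cancel' (Nat.gcd_dvd_left _ _)
  have ha : g * a = n3 := Nat.mul_div_cancel' (Nat.gcd_dvd_right _ _)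
  have hco : Nat.Coprime b a := Nat.coprime_div_gcd_div_gcd hg
  have hbpos : 0 < b := Nat.pos_of_ne_zero (by rintro h0; rw [h0] at hb; omega)
  have hapos : 0 < a := Nat.pos_of_ne_zero (by rintro h0; rw [h0] at ha; omega)
  have hbz : (g:ℤ) * b = n2 := by exact_mod_cast hb
  have haz : (g:ℤ) * a = n3 := by exact_mod_cast ha
  rw [← hbz, ← haz] at Ez
  have E'z : (m:ℤ) * x1 * g * (a*b) = p * g * (a*b) + x1 * (a+b) := by
    apply mul_left_cancel₀ hgz
    linear_combination Ez
  have habd : a * b ∣ x1 * (a + b) := by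
    have : ((a:ℤ) * b) ∣ (x1:ℤ) * (a+b) := ⟨(m:ℤ)*x1*g - p*g, by linear_combination -E'z⟩
    exact_mod_cast this
  have habx1 : a * b ∣ x1 :=
    (Nat.Coprime.dvd_of_dvd_mul_right (cop_mul_add a b hco.symm) habd)
  obtain ⟨w, hw⟩ := habx1
  have hwpos : 0 < w := Nat.pos_of_ne_zero (by rintro rfl; simp at hw; omega)
  have hwz : (x1:ℤ) = a*b*w := by exact_mod_cast hw
  rw [hwz] at E'z
  have habz : ((a:ℤ)*b) ≠ 0 := by
    have : 0 < a*b := Nat.mul_pos hapos hbpos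
    exact_mod_cast this.ne'
  have E2 : (m:ℤ) * w * g * (a*b) = p * g + w * (a+b) := by
    apply mul_left_cancel₀ habz
    linear_combination E'z
  have hwpg : w ∣ p * g := by
    have : (w:ℤ) ∣ (p:ℤ) * g := ⟨(m:ℤ)*g*a*b - (a+b), by linear_combination -E2⟩
    exact_mod_cast this
  have hpw : ¬ p ∣ w := fun hdvd => hnd (hw ▸ Dvd.dvd.mul_left hdvd _)
  have hwg : w ∣ g := (Nat.Coprime.dvd_of_dvd_mul_left
    ((Nat.coprime_comm.mp ((hp.coprime_iff_not_dvd).mpr hpw))) hwpg)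
  obtain ⟨c, hc⟩ := hwg
  have hcpos : 0 < c := Nat.pos_of_ne_zero (by rintro rfl; simp at hc; omega)
  have hcz : (g:ℤ) = w * c := by exact_mod_cast hc
  rw [hcz] at E2
  have hwzne : (w:ℤ) ≠ 0 := by exact_mod_cast hwpos.ne'
  have E3 : (m:ℤ) * w * c * (a*b) = p * c + (a+b) := by
    apply mul_left_cancel₀ hwzne
    linear_combination E2
  have hcab : c ∣ a + b := by
    have : (c:ℤ) ∣ ((a:ℤ)+b) := ⟨(m:ℤ)*w*a*b - p, by linear_combination -E3⟩
    exact_mod_cast this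
  exact ⟨a, b, c, w, hapos, hbpos, hcpos, hwpos, hco.symm, hcab, hw.trans (by ring),
    by rw [← hb, hc]; ring, by rw [← ha, hc]; ring⟩

private theorem caseC (p m x1 x2 x3 : ℕ) (hp : p.Prime)
    (hx1 : 0 < x1) (hx2 : 0 < x2) (hx3 : 0 < x3)
    (hd1 : p ∣ x1) (hd2 : p ∣ x2) (hd3 : p ∣ x3)
    (key : m * (x1 * x2 * x3) = p * (x2 * x3 + x1 * x3 + x1 * x2)) : m ≤ 3 := by
  obtain ⟨n1, rfl⟩ := hd1
  obtain ⟨n2, rfl⟩ := hd2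
  obtain ⟨n3, rfl⟩ := hd3
  have hp0 : 0 < p := hp.pos
  have hpz : (p:ℤ) ≠ 0 := by exact_mod_cast hp0.ne'
  have hn1 : 0 < n1 := Nat.pos_of_ne_zero (by rintro rfl; simp at hx1)
  have hn2 : 0 < n2 := Nat.pos_of_ne_zero (by rintro rfl; simp at hx2)
  have hn3 : 0 < n3 := Nat.pos_of_ne_zero (by rintro rfl; simp at hx3)
  have kz : (m:ℤ) * ((p*n1) * (p*n2) * (p*n3))
      = p * ((p*n2)*(p*n3) + (p*n1)*(p*n3) + (p*n1)*(p*n2)) := by exact_mod_cast key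
  have Ez : (m:ℤ) * (n1 * n2 * n3) = n2*n3 + n1*n3 + n1*n2 := by
    apply mul_left_cancel₀ (mul_ne_zero (mul_ne_zero hpz hpz) hpz)
    linear_combination kz
  have E : m * (n1 * n2 * n3) = n2*n3 + n1*n3 + n1*n2 := by exact_mod_cast Ez
  nlinarith [Nat.mul_pos (Nat.mul_pos hn1 hn2) hn3, Nat.mul_pos hn1 hn2,
    Nat.mul_pos hn2 hn3, Nat.mul_pos hn1 hn3, hn1, hn2, hn3]

/-- If `gcd(m,p) = 1` and `m/p = 1/m₁ + 1/m₂ + 1/m₃`, then either `m ∈ {1,2,3}` or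
there are positive integers `a, b, c, u` with `gcd(a,b) = 1`, `c ∣ a + b` and
`m/p = 1/(abu) + 1/(pbcu) + 1/(pacu)` or `m/p = 1/(pabu) + 1/(bcu) + 1/(acu)`. -/
theorem ternary_egyptian_structure (p m : ℕ) (hp : p.Prime) (hm : 0 < m)
    (hgcd : Nat.gcd m p = 1) (m1 m2 m3 : ℕ) (h1 : 0 < m1) (h2 : 0 < m2) (h3 : 0 < m3)
    (h : (m : ℚ) / (p : ℚ) = 1 / (m1 : ℚ) + 1 / (m2 : ℚ) + 1 / (m3 : ℚ)) :
    m = 1 ∨ m = 2 ∨ m = 3 ∨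
      ∃ a b c u : ℕ, 0 < a ∧ 0 < b ∧ 0 < c ∧ 0 < u ∧ Nat.gcd a b = 1 ∧ c ∣ a + b ∧
        ((m : ℚ) / (p : ℚ) =
            1 / ((a : ℚ) * b * u) + 1 / ((p : ℚ) * b * c * u) + 1 / ((p : ℚ) * a * c * u) ∨
          (m : ℚ) / (p : ℚ) =
            1 / ((p : ℚ) * a * b * u) + 1 / ((b : ℚ) * c * u) + 1 / ((a : ℚ) * c * u)) := by
  have hpQ : (p:ℚ) ≠ 0 := by exact_mod_cast hp.pos.ne'
  have h1Q : (m1:ℚ) ≠ 0 := by exact_mod_cast h1.ne'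
  have h2Q : (m2:ℚ) ≠ 0 := by exact_mod_cast h2.ne'
  have h3Q : (m3:ℚ) ≠ 0 := by exact_mod_cast h3.ne'
  have keyQ : (m:ℚ) * (m1*m2*m3) = p * (m2*m3 + m1*m3 + m1*m2) := by
    have h' := h
    field_simp at h'
    linarith [h']
  have key : m * (m1 * m2 * m3) = p * (m2 * m3 + m1 * m3 + m1 * m2) := by
    exact_mod_cast keyQ
  have hpm : ¬ p ∣ m := by
    intro hd
    have hdg : p ∣ Nat.gcd m p := Nat.dvd_gcd hd dvd_rfl
    rw [hgcd] at hdg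
    have := Nat.le_of_dvd one_pos hdg
    have := hp.two_le
    omega
  by_cases d1 : p ∣ m1 <;> by_cases d2 : p ∣ m2 <;> by_cases d3 : p ∣ m3
  · -- all three
    have hle := caseC p m m1 m2 m3 hp h1 h2 h3 d1 d2 d3 key
    have : m = 1 ∨ m = 2 ∨ m = 3 := by omega
    tauto
  · -- p ∣ m1, m2; not m3 : caseB on (m3, m1, m2)
    have key' : m * (m3 * m1 * m2) = p * (m1 * m2 + m3 * m2 + m3 * m1) := by
      exact_mod_cast (show (m:ℚ) * ((m3:ℚ) * m1 * m2) = p * ((m1:ℚ) * m2 + m3 * m2 + m3 * m1) by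
        linear_combination keyQ)
    obtain ⟨a, b, c, u, ha, hb, hc, hu, hcop, hcd, e1, e2, e3⟩ :=
      caseB p m m3 m1 m2 hp h3 h1 h2 d3 d1 d2 key'
    refine Or.inr (Or.inr (Or.inr ⟨a, b, c, u, ha, hb, hc, hu, hcop, hcd, Or.inl ?_⟩))
    rw [h]
    have q1 : (m1:ℚ) = (p:ℚ) * ((b:ℚ) * c * u) := by exact_mod_cast e2
    have q2 : (m2:ℚ) = (p:ℚ) * ((a:ℚ) * c * u) := by exact_mod_cast e3
    have q3 : (m3:ℚ) = (a:ℚ) * b * u := by exact_mod_cast e1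
    rw [q1, q2, q3]
    ring
  · -- p ∣ m1, m3; not m2 : caseB on (m2, m1, m3)
    have key' : m * (m2 * m1 * m3) = p * (m1 * m3 + m2 * m3 + m2 * m1) := by
      exact_mod_cast (show (m:ℚ) * ((m2:ℚ) * m1 * m3) = p * ((m1:ℚ) * m3 + m2 * m3 + m2 * m1) by
        linear_combination keyQ)
    obtain ⟨a, b, c, u, ha, hb, hc, hu, hcop, hcd, e1, e2, e3⟩ :=
      caseB p m m2 m1 m3 hp h2 h1 h3 d2 d1 d3 key'
    refine Or.inr (Or.inr (Or.inr ⟨a, b, c, u, ha, hb, hc, hu, hcop, hcd, Or.inl ?_⟩))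
    rw [h]
    have q1 : (m1:ℚ) = (p:ℚ) * ((b:ℚ) * c * u) := by exact_mod_cast e2
    have q2 : (m2:ℚ) = (a:ℚ) * b * u := by exact_mod_cast e1
    have q3 : (m3:ℚ) = (p:ℚ) * ((a:ℚ) * c * u) := by exact_mod_cast e3
    rw [q1, q2, q3]
    ring
  · -- p ∣ m1 only : caseA on (m1, m2, m3)
    obtain ⟨a, b, c, u, ha, hb, hc, hu, hcop, hcd, e1, e2, e3⟩ :=
      caseA p m m1 m2 m3 hp h1 h2 h3 d1 d2 d3 key
    refine Or.inr (Or.inr (Or.inr ⟨a, b, c, u, ha, hb, hc, hu, hcop, hcd, Or.inr ?_⟩))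
    rw [h]
    have q1 : (m1:ℚ) = (p:ℚ) * ((a:ℚ) * b * u) := by exact_mod_cast e1
    have q2 : (m2:ℚ) = (b:ℚ) * c * u := by exact_mod_cast e2
    have q3 : (m3:ℚ) = (a:ℚ) * c * u := by exact_mod_cast e3
    rw [q1, q2, q3]
    ring
  · -- p ∣ m2, m3; not m1 : caseB direct
    obtain ⟨a, b, c, u, ha, hb, hc, hu, hcop, hcd, e1, e2, e3⟩ :=
      caseB p m m1 m2 m3 hp h1 h2 h3 d1 d2 d3 key
    refine Or.inr (Or.inr (Or.inr ⟨a, b, c, u, ha, hb, hc, hu, hcop, hcd, Or.inl ?_⟩))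
    rw [h]
    have q1 : (m1:ℚ) = (a:ℚ) * b * u := by exact_mod_cast e1
    have q2 : (m2:ℚ) = (p:ℚ) * ((b:ℚ) * c * u) := by exact_mod_cast e2
    have q3 : (m3:ℚ) = (p:ℚ) * ((a:ℚ) * c * u) := by exact_mod_cast e3
    rw [q1, q2, q3]
    ring
  · -- p ∣ m2 only : caseA on (m2, m1, m3)
    have key' : m * (m2 * m1 * m3) = p * (m1 * m3 + m2 * m3 + m2 * m1) := by
      exact_mod_cast (show (m:ℚ) * ((m2:ℚ) * m1 * m3) = p * ((m1:ℚ) * m3 + m2 * m3 + m2 * m1) by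
        linear_combination keyQ)
    obtain ⟨a, b, c, u, ha, hb, hc, hu, hcop, hcd, e1, e2, e3⟩ :=
      caseA p m m2 m1 m3 hp h2 h1 h3 d2 d1 d3 key'
    refine Or.inr (Or.inr (Or.inr ⟨a, b, c, u, ha, hb, hc, hu, hcop, hcd, Or.inr ?_⟩))
    rw [h]
    have q1 : (m1:ℚ) = (b:ℚ) * c * u := by exact_mod_cast e2
    have q2 : (m2:ℚ) = (p:ℚ) * ((a:ℚ) * b * u) := by exact_mod_cast e1
    have q3 : (m3:ℚ) = (a:ℚ) * c * u := by exact_mod_cast e3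
    rw [q1, q2, q3]
    ring
  · -- p ∣ m3 only : caseA on (m3, m1, m2)
    have key' : m * (m3 * m1 * m2) = p * (m1 * m2 + m3 * m2 + m3 * m1) := by
      exact_mod_cast (show (m:ℚ) * ((m3:ℚ) * m1 * m2) = p * ((m1:ℚ) * m2 + m3 * m2 + m3 * m1) by
        linear_combination keyQ)
    obtain ⟨a, b, c, u, ha, hb, hc, hu, hcop, hcd, e1, e2, e3⟩ :=
      caseA p m m3 m1 m2 hp h3 h1 h2 d3 d1 d2 key'
    refine Or.inr (Or.inr (Or.inr ⟨a, b, c, u, ha, hb, hc, hu, hcop, hcd, Or.inr ?_⟩))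
    rw [h]
    have q1 : (m1:ℚ) = (b:ℚ) * c * u := by exact_mod_cast e2
    have q2 : (m2:ℚ) = (a:ℚ) * c * u := by exact_mod_cast e3
    have q3 : (m3:ℚ) = (p:ℚ) * ((a:ℚ) * b * u) := by exact_mod_cast e1
    rw [q1, q2, q3]
    ring
  · -- p divides none : contradiction
    exfalso
    have hpd : p ∣ m * (m1 * m2 * m3) := ⟨m2 * m3 + m1 * m3 + m1 * m2, key⟩
    rcases (hp.dvd_mul.mp hpd) with hd | hd
    · exact hpm hd
    · rcases (hp.dvd_mul.mp hd) with hd' | hd'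
      · rcases (hp.dvd_mul.mp hd') with hd'' | hd''
        · exact d1 hd''
        · exact d2 hd''
      · exact d3 hd'
end

section
/- Let x > 1 be a real number. Let a, c, u, a₁, c₁, u₁ be positive integers in the interval [x^{1/200}, x^{1/100}] and let b, b₁ be positive integers in the interval [x^{1/20}, x^{1/10}]. Assume gcd(a, b) = 1, gcd(a₁, b₁) = 1, c divides a + b, c₁ divides a₁ + b₁, a·b·u = a₁·b₁·u₁, and (a + b)/c = (a₁ + b₁)/c₁. Then a = a₁, b = b₁, c = c₁ and u = u₁. -/
/-- Distinct quadruples `(a, b, c, u)` with the stated size, coprimality and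
divisibility constraints give rise to distinct data: if `abu = a₁b₁u₁` and
`(a+b)/c = (a₁+b₁)/c₁` then the quadruples coincide. -/
theorem quadruple_rigidity (x : ℝ) (hx : 1 < x)
    (a c u a1 c1 u1 b b1 : ℕ)
    (ha : 0 < a) (hc : 0 < c) (hu : 0 < u) (ha1 : 0 < a1) (hc1 : 0 < c1) (hu1 : 0 < u1)
    (hb : 0 < b) (hb1 : 0 < b1)
    (haI : x ^ ((1 : ℝ) / 200) ≤ (a : ℝ) ∧ (a : ℝ) ≤ x ^ ((1 : ℝ) / 100))
    (hcI : x ^ ((1 : ℝ) / 200) ≤ (c : ℝ) ∧ (c : ℝ) ≤ x ^ ((1 : ℝ) / 100))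
    (huI : x ^ ((1 : ℝ) / 200) ≤ (u : ℝ) ∧ (u : ℝ) ≤ x ^ ((1 : ℝ) / 100))
    (ha1I : x ^ ((1 : ℝ) / 200) ≤ (a1 : ℝ) ∧ (a1 : ℝ) ≤ x ^ ((1 : ℝ) / 100))
    (hc1I : x ^ ((1 : ℝ) / 200) ≤ (c1 : ℝ) ∧ (c1 : ℝ) ≤ x ^ ((1 : ℝ) / 100))
    (hu1I : x ^ ((1 : ℝ) / 200) ≤ (u1 : ℝ) ∧ (u1 : ℝ) ≤ x ^ ((1 : ℝ) / 100))
    (hbI : x ^ ((1 : ℝ) / 20) ≤ (b : ℝ) ∧ (b : ℝ) ≤ x ^ ((1 : ℝ) / 10))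
    (hb1I : x ^ ((1 : ℝ) / 20) ≤ (b1 : ℝ) ∧ (b1 : ℝ) ≤ x ^ ((1 : ℝ) / 10))
    (hab : Nat.gcd a b = 1) (hab1 : Nat.gcd a1 b1 = 1)
    (hcd : c ∣ a + b) (hcd1 : c1 ∣ a1 + b1)
    (hprod : a * b * u = a1 * b1 * u1)
    (hquot : (a + b) / c = (a1 + b1) / c1) :
    a = a1 ∧ b = b1 ∧ c = c1 ∧ u = u1 := by
  have hx0 : (0:ℝ) < x := lt_trans one_pos hx
  -- reconstruct the quotient equation multiplicatively
  have hk : a + b = c * ((a + b) / c) := (Nat.mul_div_cancel' hcd).symm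
  have hk1 : a1 + b1 = c1 * ((a1 + b1) / c1) := (Nat.mul_div_cancel' hcd1).symm
  have key : c1 * (a + b) = c * (a1 + b1) := by
    rw [hk, hk1, hquot]; ring
  -- the gcd of b and b1 is large
  set d := Nat.gcd b b1 with hd_def
  have hd : 0 < d := Nat.gcd_pos_of_pos_left b1 hb
  have hdb : d ∣ b := Nat.gcd_dvd_left b b1
  have hdb1 : d ∣ b1 := Nat.gcd_dvd_right b b1
  have hbdvd : b ∣ a1 * b1 * u1 := hprod ▸ ((dvd_mul_left b a).mul_right u)
  have hcop : Nat.Coprime (b / d) (b1 / d) := Nat.coprime_div_gcd_div_gcd hd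
  have hstep : b / d ∣ (b1 / d) * (a1 * u1) := by
    have h1 : d * (b / d) ∣ d * ((b1 / d) * (a1 * u1)) := by
      rw [Nat.mul_div_cancel' hdb]
      calc b ∣ a1 * b1 * u1 := hbdvd
        _ = d * ((b1 / d) * (a1 * u1)) := by
            rw [← Nat.mul_div_cancel' hdb1]; ring_nf
            rw [Nat.mul_div_cancel' hdb1]; ring
    exact (Nat.mul_dvd_mul_iff_left hd).mp h1
  have hdivau : b / d ∣ a1 * u1 := hcop.dvd_of_dvd_mul_left hstep
  have hble : b ≤ d * (a1 * u1) := by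
    have hle : b / d ≤ a1 * u1 :=
      Nat.le_of_dvd (Nat.mul_pos ha1 hu1) hdivau
    calc b = d * (b / d) := (Nat.mul_div_cancel' hdb).symm
      _ ≤ d * (a1 * u1) := Nat.mul_le_mul_left d hle
  -- real-number bounds
  have hx50 : (0:ℝ) < x ^ ((1:ℝ)/50) := Real.rpow_pos_of_pos hx0 _
  have hprod50 : ∀ p q : ℕ, (p:ℝ) ≤ x ^ ((1:ℝ)/100) → (q:ℝ) ≤ x ^ ((1:ℝ)/100) →
      ((p*q : ℕ) : ℝ) ≤ x ^ ((1:ℝ)/50) := by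
    intro p q hp hq
    have : x ^ ((1:ℝ)/100) * x ^ ((1:ℝ)/100) = x ^ ((1:ℝ)/50) := by
      rw [← Real.rpow_add hx0]; norm_num
    push_cast
    calc (p:ℝ) * q ≤ x ^ ((1:ℝ)/100) * x ^ ((1:ℝ)/100) :=
          mul_le_mul hp hq (Nat.cast_nonneg q) (Real.rpow_nonneg hx0.le _)
      _ = x ^ ((1:ℝ)/50) := this
  have hdlarge : x ^ ((3:ℝ)/100) ≤ (d:ℝ) := by
    have h1 : ((a1*u1 : ℕ):ℝ) ≤ x ^ ((1:ℝ)/50) := hprod50 a1 u1 ha1I.2 hu1I.2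
    have h2 : x ^ ((3:ℝ)/100) * x ^ ((1:ℝ)/50) ≤ (d:ℝ) * x ^ ((1:ℝ)/50) := by
      calc x ^ ((3:ℝ)/100) * x ^ ((1:ℝ)/50) = x ^ ((1:ℝ)/20) := by
            rw [← Real.rpow_add hx0]; norm_num
        _ ≤ (b:ℝ) := hbI.1
        _ ≤ (d:ℝ) * ((a1*u1 : ℕ):ℝ) := by exact_mod_cast Nat.cast_le.mpr hble
        _ ≤ (d:ℝ) * x ^ ((1:ℝ)/50) := by
            exact mul_le_mul_of_nonneg_left h1 (Nat.cast_nonneg d)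
    exact le_of_mul_le_mul_right h2 hx50
  have h5023 : x ^ ((1:ℝ)/50) < x ^ ((3:ℝ)/100) := by
    apply Real.rpow_lt_rpow_left_iff hx |>.mpr; norm_num
  have hca1 : c * a1 < d := by
    have : ((c*a1 : ℕ):ℝ) < (d:ℝ) :=
      lt_of_le_of_lt (hprod50 c a1 hcI.2 ha1I.2) (lt_of_lt_of_le h5023 hdlarge)
    exact_mod_cast this
  have hc1a : c1 * a < d := by
    have : ((c1*a : ℕ):ℝ) < (d:ℝ) :=
      lt_of_le_of_lt (hprod50 c1 a hc1I.2 haI.2) (lt_of_lt_of_le h5023 hdlarge)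
    exact_mod_cast this
  -- congruence mod d gives c1 * a = c * a1
  have hkeyz : (c1:ℤ) * (a + b) = (c:ℤ) * (a1 + b1) := by exact_mod_cast key
  have hzdvd : (d:ℤ) ∣ ((c1:ℤ) * a - (c:ℤ) * a1) := by
    have heqz : (c1:ℤ) * a - (c:ℤ) * a1 = (c:ℤ) * b1 - (c1:ℤ) * b := by
      linear_combination hkeyz
    rw [heqz]
    exact dvd_sub (Dvd.dvd.mul_left (Int.natCast_dvd_natCast.mpr hdb1) _)
      (Dvd.dvd.mul_left (Int.natCast_dvd_natCast.mpr hdb) _)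
  have hca1z : (c:ℤ) * a1 < (d:ℤ) := by exact_mod_cast hca1
  have hc1az : (c1:ℤ) * a < (d:ℤ) := by exact_mod_cast hc1a
  have hpos1 : (0:ℤ) ≤ (c:ℤ) * a1 := by positivity
  have hpos2 : (0:ℤ) ≤ (c1:ℤ) * a := by positivity
  have habs : |(c1:ℤ) * a - (c:ℤ) * a1| < (d:ℤ) := by
    rw [abs_lt]; constructor <;> linarith
  have hz0 : (c1:ℤ) * a - (c:ℤ) * a1 = 0 := Int.eq_zero_of_abs_lt_dvd hzdvd habs
  have heq1 : c1 * a = c * a1 := by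
    have h : ((c1 * a : ℕ) : ℤ) = ((c * a1 : ℕ) : ℤ) := by push_cast; linarith
    exact_mod_cast h
  have heq2 : c1 * b = c * b1 := by
    have h : ((c1 * b : ℕ) : ℤ) = ((c * b1 : ℕ) : ℤ) := by push_cast; linear_combination hkeyz - hz0
    exact_mod_cast h
  -- gcd argument on c, c1
  set e := Nat.gcd c c1 with he_def
  have he : 0 < e := Nat.gcd_pos_of_pos_left c1 hc
  have hec : e ∣ c := Nat.gcd_dvd_left c c1
  have hec1 : e ∣ c1 := Nat.gcd_dvd_right c c1
  set m := c / e with hm_def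
  set n := c1 / e with hn_def
  have hcm : c = e * m := (Nat.mul_div_cancel' hec).symm
  have hc1n : c1 = e * n := (Nat.mul_div_cancel' hec1).symm
  have hmn : Nat.Coprime m n := Nat.coprime_div_gcd_div_gcd he
  have hna : n * a = m * a1 := by
    have h : e * (n * a) = e * (m * a1) := by
      calc e * (n * a) = (e * n) * a := by ring
        _ = c1 * a := by rw [← hc1n]
        _ = c * a1 := heq1
        _ = (e * m) * a1 := by rw [← hcm]
        _ = e * (m * a1) := by ring
    exact Nat.eq_of_mul_eq_mul_left he h
  have hnb : n * b = m * b1 := by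
    have h : e * (n * b) = e * (m * b1) := by
      calc e * (n * b) = (e * n) * b := by ring
        _ = c1 * b := by rw [← hc1n]
        _ = c * b1 := heq2
        _ = (e * m) * b1 := by rw [← hcm]
        _ = e * (m * b1) := by ring
    exact Nat.eq_of_mul_eq_mul_left he h
  have hma : m ∣ a := hmn.dvd_of_dvd_mul_left (by rw [hna]; exact dvd_mul_right m a1)
  have hmb : m ∣ b := hmn.dvd_of_dvd_mul_left (by rw [hnb]; exact dvd_mul_right m b1)
  have hm1 : m = 1 := Nat.dvd_one.mp (hab ▸ Nat.dvd_gcd hma hmb)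
  have hna1 : n ∣ a1 := hmn.symm.dvd_of_dvd_mul_left
    (by rw [← hna]; exact dvd_mul_right n a)
  have hnb1 : n ∣ b1 := hmn.symm.dvd_of_dvd_mul_left
    (by rw [← hnb]; exact dvd_mul_right n b)
  have hn1 : n = 1 := Nat.dvd_one.mp (hab1 ▸ Nat.dvd_gcd hna1 hnb1)
  have hcc1 : c = c1 := by rw [hcm, hc1n, hm1, hn1]
  have haa1 : a = a1 := Nat.eq_of_mul_eq_mul_left hc1 (by rw [heq1, hcc1])
  have hbb1 : b = b1 := Nat.eq_of_mul_eq_mul_left hc1 (by rw [heq2, hcc1])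
  have huu1 : u = u1 := by
    apply Nat.eq_of_mul_eq_mul_left (Nat.mul_pos ha hb)
    rw [hprod, haa1, hbb1]
  exact ⟨haa1, hbb1, hcc1, huu1⟩
end

section
/- There exist constants C > 0 and x₀ such that for all real x ≥ x₀: ∑ 1/φ(a·c·u·m − 1) ≤ C (log x)⁴, where the sum is over all quadruples of positive integers (a, c, u, m) with 2 ≤ a·c·u·m ≤ x. -/
/-!
From `n = ∑_{d ∣ n} φ(n/d) ≤ φ(n) ∑_{d ∣ n} 1/φ(d)` we get
`1/φ(km - 1) ≤ 2/(km) ∑_{f ∣ km - 1} 1/φ(f)`. For fixed `k = acu`, swap the sums over `m` and `f`: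
the `m ≤ N` with `f ∣ km - 1` form a single residue class mod `f`, so their reciprocals sum to at
most `1 + (1 + log N)/f`. Since `f ≤ τ(f) φ(f)`, `∑_f 1/(f φ(f)) ≤ (∑_d 1/d²)² ≪ 1`, and then the
first inequality gives `∑_{f ≤ y} 1/φ(f) ≪ log y`. Hence `∑_{m ≤ N} 1/φ(km - 1) ≪ log(kN)/k`, and
summing `1/(acu)` over `a, c, u ≤ N` contributes `(log N)³`.
-/

open Finset Real
open scoped Nat

lemma sum_Icc_inv_le_one_add_log (N : ℕ) : ∑ j ∈ Icc 1 N, (j : ℝ)⁻¹ ≤ 1 + log N := by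
  simpa [harmonic_eq_sum_Icc] using harmonic_le_one_add_log N

lemma sum_Icc_inv_sq_le_two (N : ℕ) : ∑ j ∈ Icc 1 N, ((j : ℝ) ^ 2)⁻¹ ≤ 2 := by
  have hIcc : Icc 1 N = Ioo 0 (N + 1) := by ext; simp only [mem_Icc, mem_Ioo]; omega
  simpa [hIcc] using sum_Ioo_inv_sq_le (α := ℝ) 0 (N + 1)

lemma sum_Icc_sum_divisorsAntidiagonal_le (N : ℕ) (F G : ℕ → ℝ) (hF : ∀ d, 0 ≤ F d)
    (hG : ∀ j, 0 ≤ G j) :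
    ∑ e ∈ Icc 1 N, ∑ p ∈ e.divisorsAntidiagonal, F p.1 * G p.2 ≤
      (∑ d ∈ Icc 1 N, F d) * ∑ j ∈ Icc 1 N, G j := by
  rw [sum_mul_sum, ← sum_product', ← sum_biUnion]
  · refine sum_le_sum_of_subset_of_nonneg ?_ fun p _ _ => mul_nonneg (hF _) (hG _)
    intro p hp
    simp only [mem_biUnion, mem_Icc, Nat.mem_divisorsAntidiagonal, mem_product] at hp ⊢
    obtain ⟨e, ⟨-, he⟩, rfl, hne⟩ := hp
    have h1 : p.1 ≠ 0 := left_ne_zero_of_mul hne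
    have h2 : p.2 ≠ 0 := right_ne_zero_of_mul hne
    refine ⟨⟨by omega, ?_⟩, by omega, ?_⟩
    · exact (Nat.le_mul_of_pos_right _ (by omega)).trans he
    · exact (Nat.le_mul_of_pos_left _ (by omega)).trans he
  · intro e _ e' _ hne
    refine disjoint_left.2 fun p hp hp' => hne ?_
    rw [Nat.mem_divisorsAntidiagonal] at hp hp'
    exact hp.1.symm.trans hp'.1

lemma inv_totient_le_inv_mul_sum_divisors (n : ℕ) :
    (φ n : ℝ)⁻¹ ≤ (n : ℝ)⁻¹ * ∑ d ∈ n.divisors, (φ d : ℝ)⁻¹ := by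
  rcases n.eq_zero_or_pos with rfl | hn
  · simp
  have hφ : (0 : ℝ) < φ n := by exact_mod_cast Nat.totient_pos.2 hn
  rw [← div_eq_inv_mul, le_div_iff₀ (by exact_mod_cast hn), inv_mul_le_iff₀ hφ, mul_sum]
  calc (n : ℝ) = ∑ d ∈ n.divisors, (φ (n / d) : ℝ) := by
        exact_mod_cast ((Nat.sum_div_divisors n φ).trans (Nat.sum_totient n)).symm
    _ ≤ ∑ d ∈ n.divisors, φ n * (φ d : ℝ)⁻¹ := by
        refine sum_le_sum fun d hd => ?_
        have hφd : (0 : ℝ) < φ d := by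
          exact_mod_cast Nat.totient_pos.2 (Nat.pos_of_mem_divisors hd)
        rw [← div_eq_mul_inv, le_div_iff₀ hφd]
        have := Nat.totient_super_multiplicative (n / d) d
        rw [Nat.div_mul_cancel (Nat.dvd_of_mem_divisors hd)] at this
        exact_mod_cast this

lemma inv_mul_totient_le_sum_divisorsAntidiagonal (e : ℕ) :
    ((e : ℝ) * φ e)⁻¹ ≤ ∑ p ∈ e.divisorsAntidiagonal, ((p.1 : ℝ) ^ 2)⁻¹ * ((p.2 : ℝ) ^ 2)⁻¹ := by
  rcases e.eq_zero_or_pos with rfl | he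
  · simp
  have hφ : 0 < φ e := Nat.totient_pos.2 he
  have hcard : e ≤ #e.divisorsAntidiagonal * φ e := by
    calc e = ∑ p ∈ e.divisorsAntidiagonal, φ p.1 := by
          rw [Nat.sum_divisorsAntidiagonal (fun d _ => φ d), Nat.sum_totient]
      _ ≤ ∑ p ∈ e.divisorsAntidiagonal, φ e := by
          refine sum_le_sum fun p hp => Nat.le_of_dvd hφ (Nat.totient_dvd_of_dvd ?_)
          exact Nat.dvd_of_mem_divisors (Nat.fst_mem_divisors_of_mem_antidiagonal hp)
      _ = #e.divisorsAntidiagonal * φ e := by rw [sum_const, smul_eq_mul]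
  have hterm : ∀ p ∈ e.divisorsAntidiagonal,
      ((p.1 : ℝ) ^ 2)⁻¹ * ((p.2 : ℝ) ^ 2)⁻¹ = ((e : ℝ) ^ 2)⁻¹ := by
    intro p hp
    rw [← (Nat.mem_divisorsAntidiagonal.1 hp).1]
    push_cast
    ring
  rw [sum_congr rfl hterm, sum_const, nsmul_eq_mul, ← div_eq_mul_inv,
    le_div_iff₀ (by positivity), inv_mul_le_iff₀ (by positivity)]
  calc (e : ℝ) ^ 2 = e * e := sq _
    _ ≤ e * (#e.divisorsAntidiagonal * φ e) := by gcongr; exact_mod_cast hcard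
    _ = e * φ e * #e.divisorsAntidiagonal := by ring

lemma sum_inv_mul_totient_le_four (N : ℕ) : ∑ e ∈ Icc 1 N, ((e : ℝ) * φ e)⁻¹ ≤ 4 := by
  calc ∑ e ∈ Icc 1 N, ((e : ℝ) * φ e)⁻¹
      ≤ ∑ e ∈ Icc 1 N, ∑ p ∈ e.divisorsAntidiagonal, ((p.1 : ℝ) ^ 2)⁻¹ * ((p.2 : ℝ) ^ 2)⁻¹ :=
        sum_le_sum fun e _ => inv_mul_totient_le_sum_divisorsAntidiagonal e
    _ ≤ (∑ d ∈ Icc 1 N, ((d : ℝ) ^ 2)⁻¹) * ∑ j ∈ Icc 1 N, ((j : ℝ) ^ 2)⁻¹ :=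
        sum_Icc_sum_divisorsAntidiagonal_le N (fun d => ((d : ℝ) ^ 2)⁻¹) (fun j => ((j : ℝ) ^ 2)⁻¹)
          (fun _ => by positivity) (fun _ => by positivity)
    _ ≤ 2 * 2 := mul_le_mul (sum_Icc_inv_sq_le_two N) (sum_Icc_inv_sq_le_two N)
          (sum_nonneg fun _ _ => by positivity) (by norm_num)
    _ = 4 := by norm_num

lemma inv_totient_le_sum_divisorsAntidiagonal (e : ℕ) :
    (φ e : ℝ)⁻¹ ≤ ∑ p ∈ e.divisorsAntidiagonal, ((p.1 : ℝ) * φ p.1)⁻¹ * (p.2 : ℝ)⁻¹ := by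
  refine (inv_totient_le_inv_mul_sum_divisors e).trans_eq ?_
  rw [Nat.sum_divisorsAntidiagonal (fun d j => ((d : ℝ) * φ d)⁻¹ * (j : ℝ)⁻¹), mul_sum]
  refine sum_congr rfl fun d hd => ?_
  have hd0 : (d : ℝ) ≠ 0 := by exact_mod_cast (Nat.pos_of_mem_divisors hd).ne'
  rw [Nat.cast_div (Nat.dvd_of_mem_divisors hd) hd0]
  field_simp

lemma sum_inv_totient_le (N : ℕ) : ∑ e ∈ Icc 1 N, (φ e : ℝ)⁻¹ ≤ 4 * (1 + log N) := by
  calc ∑ e ∈ Icc 1 N, (φ e : ℝ)⁻¹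
      ≤ ∑ e ∈ Icc 1 N, ∑ p ∈ e.divisorsAntidiagonal, ((p.1 : ℝ) * φ p.1)⁻¹ * (p.2 : ℝ)⁻¹ :=
        sum_le_sum fun e _ => inv_totient_le_sum_divisorsAntidiagonal e
    _ ≤ (∑ d ∈ Icc 1 N, ((d : ℝ) * φ d)⁻¹) * ∑ j ∈ Icc 1 N, (j : ℝ)⁻¹ :=
        sum_Icc_sum_divisorsAntidiagonal_le N (fun d => ((d : ℝ) * φ d)⁻¹) (fun j => (j : ℝ)⁻¹)
          (fun _ => by positivity) (fun _ => by positivity)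
    _ ≤ 4 * (1 + log N) :=
        mul_le_mul (sum_inv_mul_totient_le_four N) (sum_Icc_inv_le_one_add_log N)
          (sum_nonneg fun _ _ => by positivity) (by norm_num)

lemma sum_inv_le_sum_range_inv_mul_add_one {N f : ℕ} {M : Finset ℕ} (hM : M ⊆ Icc 1 N)
    (hmod : ∀ m ∈ M, ∀ m' ∈ M, m ≡ m' [MOD f]) :
    ∑ m ∈ M, (m : ℝ)⁻¹ ≤ ∑ j ∈ range N, ((f * j + 1 : ℕ) : ℝ)⁻¹ := by
  have hrange : ∀ m ∈ M, 1 ≤ m ∧ m ≤ N := fun m hm => mem_Icc.1 (hM hm)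
  calc ∑ m ∈ M, (m : ℝ)⁻¹ ≤ ∑ m ∈ M, ((f * ((m - 1) / f) + 1 : ℕ) : ℝ)⁻¹ := by
        refine sum_le_sum fun m hm => ?_
        have := Nat.div_add_mod (m - 1) f
        have := (hrange m hm).1
        gcongr
        omega
    _ = ∑ j ∈ M.image (fun m => (m - 1) / f), ((f * j + 1 : ℕ) : ℝ)⁻¹ := by
        rw [sum_image]
        intro m hm m' hm' hdiv
        have h1 := (hrange m hm).1
        have h1' := (hrange m' hm').1
        have hmod' : (m - 1) % f = (m' - 1) % f := Nat.ModEq.add_right_cancel' 1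
          (by rw [Nat.sub_add_cancel h1, Nat.sub_add_cancel h1']; exact hmod m hm m' hm')
        have : m - 1 = m' - 1 := by
          rw [← Nat.div_add_mod (m - 1) f, ← Nat.div_add_mod (m' - 1) f, hmod']
          simp only at hdiv
          rw [hdiv]
        omega
    _ ≤ ∑ j ∈ range N, ((f * j + 1 : ℕ) : ℝ)⁻¹ := by
        refine sum_le_sum_of_subset_of_nonneg (fun j hj => ?_) fun _ _ _ => by positivity
        obtain ⟨m, hm, rfl⟩ := mem_image.1 hj
        have := Nat.div_le_self (m - 1) f
        have := hrange m hm
        exact mem_range.2 (by omega)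

lemma sum_range_inv_mul_add_one_le (N : ℕ) {f : ℕ} (hf : 0 < f) :
    ∑ j ∈ range N, ((f * j + 1 : ℕ) : ℝ)⁻¹ ≤ 1 + (1 + log N) / f := by
  calc ∑ j ∈ range N, ((f * j + 1 : ℕ) : ℝ)⁻¹
      ≤ ∑ j ∈ range (N + 1), ((f * j + 1 : ℕ) : ℝ)⁻¹ :=
        sum_le_sum_of_subset_of_nonneg (range_subset_range.2 N.le_succ)
          fun _ _ _ => by positivity
    _ = ∑ j ∈ range N, ((f * (j + 1) + 1 : ℕ) : ℝ)⁻¹ + 1 := by simp [sum_range_succ']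
    _ ≤ ∑ j ∈ range N, (f : ℝ)⁻¹ * ((j + 1 : ℕ) : ℝ)⁻¹ + 1 := by
        gcongr with j
        rw [← mul_inv]
        gcongr
        push_cast
        linarith
    _ = (harmonic N : ℝ) / f + 1 := by
        rw [← mul_sum, harmonic]
        push_cast
        ring
    _ ≤ 1 + (1 + log N) / f := by
        rw [add_comm]
        gcongr
        exact harmonic_le_one_add_log N

lemma modEq_of_dvd_mul_sub_one {f k m m' : ℕ} (hm : 0 < k * m) (hm' : 0 < k * m')
    (h : f ∣ k * m - 1) (h' : f ∣ k * m' - 1) : m ≡ m' [MOD f] := by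
  have h1 : 1 ≡ k * m [MOD f] := (Nat.modEq_iff_dvd' hm).2 h
  have h1' : 1 ≡ k * m' [MOD f] := (Nat.modEq_iff_dvd' hm').2 h'
  have hcop : Nat.Coprime (k * m) f := by
    rw [Nat.Coprime, ← h1.gcd_eq, Nat.gcd_one_left]
  exact Nat.ModEq.cancel_left_of_coprime (Nat.Coprime.coprime_mul_right hcop).symm
    (h1.symm.trans h1')

lemma sum_inv_filter_dvd_mul_sub_one_le (N : ℕ) {k f : ℕ} (hk : 0 < k) (hf : 0 < f) :
    ∑ m ∈ (Icc 1 N).filter (fun m => f ∣ k * m - 1), (m : ℝ)⁻¹ ≤ 1 + (1 + log N) / f := by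
  refine (sum_inv_le_sum_range_inv_mul_add_one (filter_subset _ _) fun m hm m' hm' => ?_).trans
    (sum_range_inv_mul_add_one_le N hf)
  simp only [mem_filter, mem_Icc] at hm hm'
  exact modEq_of_dvd_mul_sub_one (Nat.mul_pos hk hm.1.1) (Nat.mul_pos hk hm'.1.1) hm.2 hm'.2

lemma inv_totient_sub_one_le_sum_filter_dvd {n K : ℕ} (hn : n - 1 ≤ K) :
    (φ (n - 1) : ℝ)⁻¹ ≤ 2 * (n : ℝ)⁻¹ * ∑ d ∈ (Icc 1 K).filter (· ∣ n - 1), (φ d : ℝ)⁻¹ := by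
  rcases Nat.lt_or_ge n 2 with hn2 | hn2
  · rw [show n - 1 = 0 by omega, Nat.totient_zero, Nat.cast_zero, inv_zero]
    positivity
  calc (φ (n - 1) : ℝ)⁻¹ ≤ ((n - 1 : ℕ) : ℝ)⁻¹ * ∑ d ∈ (n - 1).divisors, (φ d : ℝ)⁻¹ :=
        inv_totient_le_inv_mul_sum_divisors (n - 1)
    _ ≤ 2 * (n : ℝ)⁻¹ * ∑ d ∈ (Icc 1 K).filter (· ∣ n - 1), (φ d : ℝ)⁻¹ := by
        gcongr
        · rw [Nat.cast_sub (by omega), ← inv_inv (2 : ℝ), ← mul_inv]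
          gcongr
          have : (2 : ℝ) ≤ n := by exact_mod_cast hn2
          linarith
        · intro d hd
          have := Nat.divisor_le hd
          have := Nat.pos_of_mem_divisors hd
          exact mem_filter.2 ⟨mem_Icc.2 ⟨by omega, by omega⟩, Nat.dvd_of_mem_divisors hd⟩

lemma sum_inv_totient_mul_sub_one_le (N : ℕ) {k : ℕ} (hk : 0 < k) :
    ∑ m ∈ Icc 1 N, (φ (k * m - 1) : ℝ)⁻¹ ≤ 16 * (1 + log (k * N)) / k := by
  have hlog : log N ≤ log (k * N) := by
    rcases N.eq_zero_or_pos with rfl | hN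
    · simp
    exact log_le_log (by positivity) (le_mul_of_one_le_left (by positivity) (by exact_mod_cast hk))
  calc ∑ m ∈ Icc 1 N, (φ (k * m - 1) : ℝ)⁻¹
      ≤ ∑ m ∈ Icc 1 N, 2 * ((k * m : ℕ) : ℝ)⁻¹ *
          ∑ f ∈ (Icc 1 (k * N)).filter (· ∣ k * m - 1), (φ f : ℝ)⁻¹ := by
        gcongr with m hm
        have := Nat.mul_le_mul_left k (mem_Icc.1 hm).2
        exact inv_totient_sub_one_le_sum_filter_dvd (by omega)
    _ = ∑ f ∈ Icc 1 (k * N), 2 * (k : ℝ)⁻¹ * (φ f : ℝ)⁻¹ *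
          ∑ m ∈ (Icc 1 N).filter (fun m => f ∣ k * m - 1), (m : ℝ)⁻¹ := by
        simp only [mul_sum, sum_filter, mul_ite, mul_zero]
        rw [sum_comm]
        refine sum_congr rfl fun f _ => sum_congr rfl fun m _ => ?_
        split_ifs
        · push_cast
          ring
        · rfl
    _ ≤ ∑ f ∈ Icc 1 (k * N), 2 * (k : ℝ)⁻¹ * (φ f : ℝ)⁻¹ * (1 + (1 + log N) / f) := by
        gcongr with f hf
        exact sum_inv_filter_dvd_mul_sub_one_le N hk (mem_Icc.1 hf).1
    _ = 2 * (k : ℝ)⁻¹ * (∑ f ∈ Icc 1 (k * N), (φ f : ℝ)⁻¹ +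
          (1 + log N) * ∑ f ∈ Icc 1 (k * N), ((f : ℝ) * φ f)⁻¹) := by
        rw [mul_sum (s := Icc 1 (k * N)) (a := 1 + log N), ← sum_add_distrib, mul_sum]
        refine sum_congr rfl fun f _ => ?_
        rw [mul_inv]
        ring
    _ ≤ 2 * (k : ℝ)⁻¹ * (4 * (1 + log (k * N)) + (1 + log (k * N)) * 4) := by
        have := sum_inv_totient_le (k * N)
        push_cast at this
        gcongr
        · linarith [log_natCast_nonneg N]
        · exact sum_inv_mul_totient_le_four (k * N)
    _ = 16 * (1 + log (k * N)) / k := by ring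

lemma sum_inv_totient_mul_mul_mul_sub_one_le (N : ℕ) :
    ∑ a ∈ Icc 1 N, ∑ c ∈ Icc 1 N, ∑ u ∈ Icc 1 N, ∑ m ∈ Icc 1 N,
      (φ (a * c * u * m - 1) : ℝ)⁻¹ ≤ 64 * (1 + log N) ^ 4 := by
  set L := 1 + log N
  have hlogN : 0 ≤ log N := log_natCast_nonneg N
  have hinner : ∀ a ∈ Icc 1 N, ∀ c ∈ Icc 1 N, ∀ u ∈ Icc 1 N,
      ∑ m ∈ Icc 1 N, (φ (a * c * u * m - 1) : ℝ)⁻¹ ≤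
        64 * L * ((a : ℝ)⁻¹ * ((c : ℝ)⁻¹ * (u : ℝ)⁻¹)) := by
    intro a ha c hc u hu
    simp only [mem_Icc] at ha hc hu
    have hk : 0 < a * c * u := Nat.mul_pos (Nat.mul_pos ha.1 hc.1) hu.1
    have hlog : log ((a * c * u : ℕ) * N) ≤ 4 * log N := by
      calc log ((a * c * u : ℕ) * N) ≤ log ((N ^ 4 : ℕ) : ℝ) := by
            rw [← Nat.cast_mul]
            gcongr
            · exact_mod_cast Nat.mul_pos hk (by omega)
            · calc a * c * u * N ≤ N * N * N * N := by gcongr <;> omega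
                _ = N ^ 4 := by ring
        _ = 4 * log N := by push_cast; rw [log_pow]; norm_num
    calc ∑ m ∈ Icc 1 N, (φ (a * c * u * m - 1) : ℝ)⁻¹
        ≤ 16 * (1 + log ((a * c * u : ℕ) * N)) / (a * c * u : ℕ) :=
          sum_inv_totient_mul_sub_one_le N hk
      _ ≤ 16 * (4 * L) / (a * c * u : ℕ) := by gcongr; linarith
      _ = 64 * L * ((a : ℝ)⁻¹ * ((c : ℝ)⁻¹ * (u : ℝ)⁻¹)) := by
          push_cast
          rw [div_eq_mul_inv, mul_inv, mul_inv]
          ring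
  calc _ ≤ ∑ a ∈ Icc 1 N, ∑ c ∈ Icc 1 N, ∑ u ∈ Icc 1 N,
          64 * L * ((a : ℝ)⁻¹ * ((c : ℝ)⁻¹ * (u : ℝ)⁻¹)) := by
        gcongr with a ha c hc u hu
        exact hinner a ha c hc u hu
    _ = 64 * L * (∑ j ∈ Icc 1 N, (j : ℝ)⁻¹) ^ 3 := by
        simp only [← mul_sum, ← sum_mul]
        ring
    _ ≤ 64 * L * L ^ 3 := by
        gcongr
        exact sum_Icc_inv_le_one_add_log N
    _ = 64 * L ^ 4 := by ring

/-- `∑_{2 ≤ acum ≤ x} 1/φ(acum − 1) ≪ (log x)⁴`, summed over quadruples of positive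
integers `(a, c, u, m)`. -/
theorem sum_inv_totient_quadruples :
    ∃ C : ℝ, 0 < C ∧ ∃ x₀ : ℝ, ∀ x : ℝ, x₀ ≤ x →
      ∑ q ∈ ((Finset.Icc 1 ⌊x⌋₊ ×ˢ Finset.Icc 1 ⌊x⌋₊ ×ˢ Finset.Icc 1 ⌊x⌋₊ ×ˢ
            Finset.Icc 1 ⌊x⌋₊).filter
          (fun q : ℕ × ℕ × ℕ × ℕ =>
            2 ≤ q.1 * q.2.1 * q.2.2.1 * q.2.2.2 ∧
              ((q.1 * q.2.1 * q.2.2.1 * q.2.2.2 : ℕ) : ℝ) ≤ x)),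
        (1 : ℝ) / (Nat.totient (q.1 * q.2.1 * q.2.2.1 * q.2.2.2 - 1) : ℝ) ≤
      C * (Real.log x) ^ 4 := by
  refine ⟨1024, by norm_num, 3, fun x hx => ?_⟩
  have hlog_x : 1 ≤ log x := by
    rw [le_log_iff_exp_le (by linarith)]
    linarith [exp_one_lt_d9]
  have hlog_floor : 1 + log ⌊x⌋₊ ≤ 2 * log x := by
    have : log ⌊x⌋₊ ≤ log x :=
      log_le_log (by exact_mod_cast Nat.floor_pos.2 (by linarith)) (Nat.floor_le (by linarith))
    linarith
  calc _ ≤ ∑ q ∈ Icc 1 ⌊x⌋₊ ×ˢ Icc 1 ⌊x⌋₊ ×ˢ Icc 1 ⌊x⌋₊ ×ˢ Icc 1 ⌊x⌋₊,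
          (1 : ℝ) / φ (q.1 * q.2.1 * q.2.2.1 * q.2.2.2 - 1) :=
        sum_le_sum_of_subset_of_nonneg (filter_subset _ _) fun _ _ _ => by positivity
    _ ≤ 64 * (1 + log ⌊x⌋₊) ^ 4 := by
        simpa only [sum_product, one_div] using sum_inv_totient_mul_mul_mul_sub_one_le ⌊x⌋₊
    _ ≤ 64 * (2 * log x) ^ 4 := by gcongr
    _ = 1024 * log x ^ 4 := by ring
end

section
/- There exist constants C > 0 and x₀ such that for all real x ≥ x₀: ∑ 1/u ≤ C / (log x)², where the sum is over all positive integers u with x^{1/200} ≤ u ≤ x^{1/100} and τ(u) ≥ (log x)⁴. -/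
/-!
Markov's inequality: on the range of summation `τ(u) / (log x)⁴ ≥ 1`, so the sum is at most
`(log x)⁻⁴ ∑_{u ≤ y} τ(u) / u` with `y = x^{1/100}`. Writing `τ(u) / u = ∑_{de = u} 1/(de)`,
the last sum is at most `(∑_{d ≤ y} 1/d)² ≤ (1 + log y)² ≤ (log x)²`.
-/

open Finset Real

lemma sum_one_div_Icc_floor_le_one_add_log {y : ℝ} (hy : 1 ≤ y) :
    ∑ d ∈ Icc 1 ⌊y⌋₊, (1 : ℝ) / d ≤ 1 + log y := by
  have hN : (⌊y⌋₊ : ℝ) ≤ y := Nat.floor_le (by linarith)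
  have hN1 : (1 : ℝ) ≤ ⌊y⌋₊ := by exact_mod_cast Nat.one_le_floor_iff y |>.mpr hy
  calc ∑ d ∈ Icc 1 ⌊y⌋₊, (1 : ℝ) / d = harmonic ⌊y⌋₊ := by simp [harmonic_eq_sum_Icc]
    _ ≤ 1 + log ⌊y⌋₊ := harmonic_le_one_add_log _
    _ ≤ 1 + log y := by gcongr

lemma sum_card_divisors_div_le_sq (N : ℕ) :
    ∑ u ∈ Icc 1 N, (u.divisors.card : ℝ) / u ≤ (∑ d ∈ Icc 1 N, (1 : ℝ) / d) ^ 2 := by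
  have fiber {u : ℕ} (hu : u ∈ Icc 1 N) :
      {p ∈ Icc 1 N ×ˢ Icc 1 N | p.1 * p.2 = u} = u.divisorsAntidiagonal := by
    ext ⟨d, e⟩
    simp only [mem_Icc] at hu
    simp only [mem_filter, mem_product, mem_Icc, Nat.mem_divisorsAntidiagonal]
    constructor
    · rintro ⟨-, rfl⟩
      exact ⟨rfl, by omega⟩
    · rintro ⟨rfl, -⟩
      have hd : 0 < d := Nat.pos_of_mul_pos_right (by omega : 0 < d * e)
      have he : 0 < e := Nat.pos_of_mul_pos_left (by omega : 0 < d * e)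
      exact ⟨⟨⟨hd, by nlinarith⟩, he, by nlinarith⟩, rfl⟩
  calc ∑ u ∈ Icc 1 N, (u.divisors.card : ℝ) / u
      = ∑ u ∈ Icc 1 N, ∑ p ∈ {p ∈ Icc 1 N ×ˢ Icc 1 N | p.1 * p.2 = u},
          (1 : ℝ) / p.1 / p.2 := by
        refine sum_congr rfl fun u hu => ?_
        rw [fiber hu, sum_congr rfl fun p hp => by
          rw [div_div, ← Nat.cast_mul, (Nat.mem_divisorsAntidiagonal.mp hp).1]]
        rw [sum_const, ← Nat.map_div_right_divisors, card_map, nsmul_eq_mul, mul_one_div]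
    _ ≤ ∑ p ∈ Icc 1 N ×ˢ Icc 1 N, (1 : ℝ) / p.1 / p.2 :=
        sum_fiberwise_le_sum_of_sum_fiber_nonneg fun _ _ =>
          sum_nonneg fun _ _ => by positivity
    _ = (∑ d ∈ Icc 1 N, (1 : ℝ) / d) ^ 2 := by
        simp only [sq, sum_mul_sum, ← sum_product', div_div, one_div_mul_one_div]

lemma sum_card_divisors_div_Icc_floor_le {y : ℝ} (hy : 1 ≤ y) :
    ∑ u ∈ Icc 1 ⌊y⌋₊, (u.divisors.card : ℝ) / u ≤ (1 + log y) ^ 2 :=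
  (sum_card_divisors_div_le_sq _).trans <|
    pow_le_pow_left₀ (sum_nonneg fun _ _ => by positivity)
      (sum_one_div_Icc_floor_le_one_add_log hy) 2

lemma sum_filter_le_sum_mul_div {ι : Type*} {s : Finset ι} {p : ι → Prop} [DecidablePred p]
    {f g : ι → ℝ} {T : ℝ} (hT : 0 < T) (hf : ∀ i ∈ s, 0 ≤ f i) (hg : ∀ i ∈ s, 0 ≤ g i)
    (hpg : ∀ i ∈ s, p i → T ≤ g i) :
    ∑ i ∈ s with p i, f i ≤ (∑ i ∈ s, f i * g i) / T := by
  rw [le_div_iff₀ hT, sum_mul]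
  calc ∑ i ∈ s with p i, f i * T ≤ ∑ i ∈ s with p i, f i * g i :=
        sum_le_sum fun i hi => by
          rw [mem_filter] at hi
          exact mul_le_mul_of_nonneg_left (hpg i hi.1 hi.2) (hf i hi.1)
    _ ≤ ∑ i ∈ s, f i * g i :=
        sum_le_sum_of_subset_of_nonneg (filter_subset _ _) fun i hi _ =>
          mul_nonneg (hf i hi) (hg i hi)

/-- `∑ 1/u ≪ 1/(log x)²`, where the sum is over `u ∈ [x^{1/200}, x^{1/100}]` with
`τ(u) ≥ (log x)⁴`. -/
theorem sum_inv_large_tau :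
    ∃ C : ℝ, 0 < C ∧ ∃ x₀ : ℝ, ∀ x : ℝ, x₀ ≤ x →
      ∑ u ∈ ((Finset.Icc 1 ⌊x ^ ((1 : ℝ) / 100)⌋₊).filter
          (fun u : ℕ => x ^ ((1 : ℝ) / 200) ≤ (u : ℝ) ∧
            (Real.log x) ^ 4 ≤ (u.divisors.card : ℝ))),
        (1 : ℝ) / (u : ℝ) ≤
      C / (Real.log x) ^ 2 := by
  refine ⟨1, one_pos, exp 2, fun x hx => ?_⟩
  have hx0 : 0 < x := (exp_pos 2).trans_le hx
  have hL : 2 ≤ log x := by rwa [le_log_iff_exp_le hx0]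
  have hy : 1 ≤ x ^ ((1 : ℝ) / 100) :=
    one_le_rpow ((one_le_exp zero_le_two).trans hx) (by norm_num)
  have hlogy : log (x ^ ((1 : ℝ) / 100)) = log x / 100 := by rw [log_rpow hx0]; ring
  calc _ ≤ (∑ u ∈ Icc 1 ⌊x ^ ((1 : ℝ) / 100)⌋₊, (1 : ℝ) / u * u.divisors.card) / log x ^ 4 :=
        sum_filter_le_sum_mul_div (by positivity) (fun _ _ => by positivity)
          (fun _ _ => by positivity) fun _ _ hu => hu.2
    _ ≤ (1 + log x / 100) ^ 2 / log x ^ 4 := by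
        simp only [one_div_mul_eq_div]
        rw [← hlogy]
        gcongr
        exact sum_card_divisors_div_Icc_floor_le hy
    _ ≤ log x ^ 2 / log x ^ 4 := by gcongr; linarith
    _ = 1 / log x ^ 2 := by field_simp
end

section
/- There exist constants C > 0 and x₀ such that for all real x ≥ x₀: ∑ τ_I(n)/n ≤ C log x, where the sum is over all positive integers n with x^{1/19} ≤ n ≤ x^{1/10} and τ(n) ≥ (log x)⁴, and τ_I(n) denotes the number of divisors d of n with x^{1/200} ≤ d ≤ x^{1/100}. -/
open Finset

lemma harm_le_aux (N : ℕ) : ∑ m ∈ Icc 1 N, (1:ℝ)/m ≤ 1 + Real.log N := by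
  have h := harmonic_le_one_add_log N
  have : ((harmonic N : ℚ) : ℝ) = ∑ m ∈ Icc 1 N, (1:ℝ)/m := by
    simp [harmonic_eq_sum_Icc, one_div]
  linarith [this ▸ h]

lemma harm_nonneg_aux (N : ℕ) : 0 ≤ ∑ m ∈ Icc 1 N, (1:ℝ)/m := by
  positivity

lemma tau_sq_sum_aux (N : ℕ) :
    ∑ n ∈ Icc 1 N, ((n.divisors.card : ℝ))^2 / n ≤ (∑ m ∈ Icc 1 N, (1:ℝ)/m)^4 := by
  have step1 : ∑ n ∈ Icc 1 N, ((n.divisors.card : ℝ))^2 / n =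
      ∑ p ∈ ((Icc 1 N) ×ˢ ((Icc 1 N) ×ˢ (Icc 1 N))).filter
          (fun p : ℕ × ℕ × ℕ => p.2.1 ∣ p.1 ∧ p.2.2 ∣ p.1), (1 : ℝ) / p.1 := by
    rw [Finset.sum_filter, Finset.sum_product]
    refine Finset.sum_congr rfl fun n hn => ?_
    simp only [Finset.mem_Icc] at hn
    have hdiv : n.divisors = (Icc 1 N).filter (· ∣ n) := by
      ext d
      simp only [Nat.mem_divisors, Finset.mem_filter, Finset.mem_Icc]
      constructor
      · rintro ⟨hd, hn0⟩
        exact ⟨⟨Nat.one_le_iff_ne_zero.mpr (fun h => by simp [h] at hd; omega),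
          le_trans (Nat.le_of_dvd (by omega) hd) hn.2⟩, hd⟩
      · rintro ⟨_, hd⟩
        exact ⟨hd, by omega⟩
    rw [hdiv]
    rw [Finset.card_filter]
    push_cast
    rw [Finset.sum_product]
    simp only [Finset.sum_ite_eq]
    rw [sq, Finset.sum_mul_sum]
    rw [Finset.sum_div]
    refine Finset.sum_congr rfl fun d1 _ => ?_
    rw [Finset.sum_div]
    refine Finset.sum_congr rfl fun d2 _ => ?_
    by_cases h1 : d1 ∣ n <;> by_cases h2 : d2 ∣ n <;> simp [h1, h2]
  have step3 : ∑ t ∈ (Icc 1 N) ×ˢ ((Icc 1 N) ×ˢ ((Icc 1 N) ×ˢ (Icc 1 N))),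
      (1 : ℝ) / (t.1 * t.2.1 * t.2.2.1 * t.2.2.2) =
      (∑ m ∈ Icc 1 N, (1:ℝ)/m)^4 := by
    have h : (∑ m ∈ Icc 1 N, (1:ℝ)/m)^4 =
        (∑ m ∈ Icc 1 N, (1:ℝ)/m) * ((∑ m ∈ Icc 1 N, (1:ℝ)/m) *
          ((∑ m ∈ Icc 1 N, (1:ℝ)/m) * (∑ m ∈ Icc 1 N, (1:ℝ)/m))) := by ring
    rw [h, Finset.sum_mul, Finset.sum_product]
    refine Finset.sum_congr rfl fun g _ => ?_
    rw [Finset.sum_mul, Finset.mul_sum, Finset.sum_product]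
    refine Finset.sum_congr rfl fun a _ => ?_
    rw [Finset.sum_mul, Finset.mul_sum, Finset.mul_sum, Finset.sum_product]
    refine Finset.sum_congr rfl fun b _ => ?_
    rw [Finset.mul_sum, Finset.mul_sum, Finset.mul_sum]
    refine Finset.sum_congr rfl fun m _ => ?_
    simp only [one_div, mul_inv]
    ring
  rw [step1, ← step3]
  -- step 2: injection
  set S := ((Icc 1 N) ×ˢ ((Icc 1 N) ×ˢ (Icc 1 N))).filter
      (fun p : ℕ × ℕ × ℕ => p.2.1 ∣ p.1 ∧ p.2.2 ∣ p.1) with hS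
  set f : ℕ × ℕ × ℕ → ℕ × ℕ × ℕ × ℕ := fun p =>
    (p.2.1.gcd p.2.2, p.2.1 / p.2.1.gcd p.2.2, p.2.2 / p.2.1.gcd p.2.2,
      p.1 / p.2.1.lcm p.2.2) with hf
  have key : ∀ p ∈ S, 1 ≤ p.1 ∧ p.1 ≤ N ∧ 1 ≤ p.2.1 ∧ p.2.1 ≤ N ∧ 1 ≤ p.2.2 ∧ p.2.2 ≤ N ∧
      p.2.1 ∣ p.1 ∧ p.2.2 ∣ p.1 := by
    intro p hp
    simp only [hS, Finset.mem_filter, Finset.mem_product, Finset.mem_Icc] at hp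
    exact ⟨hp.1.1.1, hp.1.1.2, hp.1.2.1.1, hp.1.2.1.2, hp.1.2.2.1, hp.1.2.2.2, hp.2.1, hp.2.2⟩
  have recon : ∀ p ∈ S, (f p).1 * (f p).2.1 = p.2.1 ∧ (f p).1 * (f p).2.2.1 = p.2.2 ∧
      (f p).1 * (f p).2.1 * (f p).2.2.1 * (f p).2.2.2 = p.1 := by
    intro p hp
    obtain ⟨h1, h2, h3, h3', h4, h4', h5, h6⟩ := key p hp
    have hg1 : p.2.1.gcd p.2.2 ∣ p.2.1 := Nat.gcd_dvd_left _ _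
    have hg2 : p.2.1.gcd p.2.2 ∣ p.2.2 := Nat.gcd_dvd_right _ _
    have hgpos : 0 < p.2.1.gcd p.2.2 := Nat.gcd_pos_of_pos_left _ (by omega)
    have hl : p.2.1.lcm p.2.2 ∣ p.1 := Nat.lcm_dvd h5 h6
    have e1 : p.2.1.gcd p.2.2 * (p.2.1 / p.2.1.gcd p.2.2) = p.2.1 :=
      Nat.mul_div_cancel' hg1
    have e2 : p.2.1.gcd p.2.2 * (p.2.2 / p.2.1.gcd p.2.2) = p.2.2 :=
      Nat.mul_div_cancel' hg2
    refine ⟨e1, e2, ?_⟩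
    have hlcm : p.2.1.gcd p.2.2 * p.2.1.lcm p.2.2 = p.2.1 * p.2.2 :=
      Nat.gcd_mul_lcm _ _
    have e3 : p.2.1 * (p.2.2 / p.2.1.gcd p.2.2) = p.2.1.lcm p.2.2 := by
      rw [← Nat.mul_div_assoc p.2.1 hg2, ← hlcm, Nat.mul_div_cancel_left _ hgpos]
    simp only [hf]
    rw [e1, e3, Nat.mul_div_cancel' hl]
  have hinj : Set.InjOn f S := by
    intro p hp q hq hpq
    obtain ⟨r1, r2, r3⟩ := recon p hp
    obtain ⟨s1, s2, s3⟩ := recon q hq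
    have e1 : (f p).1 = (f q).1 := by rw [hpq]
    have e2 : (f p).2.1 = (f q).2.1 := by rw [hpq]
    have e3 : (f p).2.2.1 = (f q).2.2.1 := by rw [hpq]
    have e4 : (f p).2.2.2 = (f q).2.2.2 := by rw [hpq]
    have w1 : p.2.1 = q.2.1 := by rw [← r1, ← s1, e1, e2]
    have w2 : p.2.2 = q.2.2 := by rw [← r2, ← s2, e1, e3]
    have w0 : p.1 = q.1 := by rw [← r3, ← s3, e1, e2, e3, e4]
    exact Prod.ext w0 (Prod.ext w1 w2)
  calc ∑ p ∈ S, (1:ℝ) / p.1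
      = ∑ t ∈ S.image f, (1:ℝ) / (t.1 * t.2.1 * t.2.2.1 * t.2.2.2) := by
        rw [Finset.sum_image (fun p hp q hq h => hinj hp hq h)]
        refine Finset.sum_congr rfl fun p hp => ?_
        obtain ⟨r1, r2, r3⟩ := recon p hp
        have hc := congrArg (Nat.cast : ℕ → ℝ) r3
        push_cast at hc
        rw [hc]
    _ ≤ ∑ t ∈ (Icc 1 N) ×ˢ ((Icc 1 N) ×ˢ ((Icc 1 N) ×ˢ (Icc 1 N))),
        (1 : ℝ) / (t.1 * t.2.1 * t.2.2.1 * t.2.2.2) := by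
        refine Finset.sum_le_sum_of_subset_of_nonneg ?_ (fun t _ _ => by positivity)
        intro t ht
        obtain ⟨p, hp, rfl⟩ := Finset.mem_image.mp ht
        obtain ⟨h1, h2, h3, h3', h4, h4', h5, h6⟩ := key p hp
        have hgpos : 0 < p.2.1.gcd p.2.2 := Nat.gcd_pos_of_pos_left _ (by omega)
        have hlpos : 0 < p.2.1.lcm p.2.2 := Nat.lcm_pos (by omega) (by omega)
        have hl : p.2.1.lcm p.2.2 ∣ p.1 := Nat.lcm_dvd h5 h6
        simp only [hf, Finset.mem_product, Finset.mem_Icc]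
        refine ⟨⟨hgpos, le_trans (Nat.le_of_dvd (by omega) (Nat.gcd_dvd_left _ _)) h3'⟩,
          ⟨Nat.div_pos (Nat.le_of_dvd (by omega) (Nat.gcd_dvd_left _ _)) hgpos,
            le_trans (Nat.div_le_self _ _) h3'⟩,
          ⟨Nat.div_pos (Nat.le_of_dvd (by omega) (Nat.gcd_dvd_right _ _)) hgpos,
            le_trans (Nat.div_le_self _ _) h4'⟩,
          Nat.div_pos (Nat.le_of_dvd (by omega) hl) hlpos,
          le_trans (Nat.div_le_self _ _) h2⟩

/-- `∑ τ_I(n)/n ≪ log x`, where the sum is over `n ∈ [x^{1/19}, x^{1/10}]` with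
`τ(n) ≥ (log x)⁴`, and `τ_I(n)` counts the divisors of `n` in `[x^{1/200}, x^{1/100}]`. -/
theorem sum_tauI_over_n_large_tau :
    ∃ C : ℝ, 0 < C ∧ ∃ x₀ : ℝ, ∀ x : ℝ, x₀ ≤ x →
      ∑ n ∈ ((Finset.Icc 1 ⌊x ^ ((1 : ℝ) / 10)⌋₊).filter
          (fun n : ℕ => x ^ ((1 : ℝ) / 19) ≤ (n : ℝ) ∧
            (Real.log x) ^ 4 ≤ (n.divisors.card : ℝ))),
        ((n.divisors.filter (fun d : ℕ =>
            x ^ ((1 : ℝ) / 200) ≤ (d : ℝ) ∧ (d : ℝ) ≤ x ^ ((1 : ℝ) / 100))).card : ℝ) /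
          (n : ℝ) ≤
      C * Real.log x := by
  refine ⟨1, one_pos, Real.exp 10, fun x hx => ?_⟩
  have hx0 : (0:ℝ) < x := lt_of_lt_of_le (Real.exp_pos 10) hx
  have hlog : (10:ℝ) ≤ Real.log x := by
    rw [← Real.log_exp 10]
    exact Real.log_le_log (Real.exp_pos 10) hx
  have hlogpos : (0:ℝ) < Real.log x := by linarith
  set N := ⌊x ^ ((1 : ℝ) / 10)⌋₊ with hN
  have hx1 : (1:ℝ) ≤ x := le_trans (by nlinarith [Real.exp_pos 10, Real.add_one_le_exp (10:ℝ)]) hx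
  have hNx : (N : ℝ) ≤ x ^ ((1:ℝ)/10) := Nat.floor_le (by positivity)
  have hN1 : 1 ≤ N := by
    rw [hN, Nat.le_floor_iff (by positivity)]
    push_cast
    exact Real.one_le_rpow hx1 (by norm_num)
  have hlogN : Real.log N ≤ (1/10) * Real.log x := by
    calc Real.log N ≤ Real.log (x ^ ((1:ℝ)/10)) := by
          apply Real.log_le_log (by exact_mod_cast hN1) hNx
      _ = (1/10) * Real.log x := Real.log_rpow hx0 _
  set L := (Real.log x)^4 with hL
  have hLpos : 0 < L := by positivity
  -- termwise bound
  have hterm : ∀ n ∈ ((Finset.Icc 1 N).filter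
      (fun n : ℕ => x ^ ((1 : ℝ) / 19) ≤ (n : ℝ) ∧ L ≤ (n.divisors.card : ℝ))),
      ((n.divisors.filter (fun d : ℕ =>
          x ^ ((1 : ℝ) / 200) ≤ (d : ℝ) ∧ (d : ℝ) ≤ x ^ ((1 : ℝ) / 100))).card : ℝ) / n ≤
      (1/L) * (((n.divisors.card : ℝ))^2 / n) := by
    intro n hn
    simp only [Finset.mem_filter, Finset.mem_Icc] at hn
    obtain ⟨⟨hn1, hn2⟩, _, htau⟩ := hn
    have hnpos : (0:ℝ) < n := by exact_mod_cast hn1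
    have hcard : ((n.divisors.filter (fun d : ℕ =>
        x ^ ((1 : ℝ) / 200) ≤ (d : ℝ) ∧ (d : ℝ) ≤ x ^ ((1 : ℝ) / 100))).card : ℝ) ≤
        (n.divisors.card : ℝ) := by
      exact_mod_cast Finset.card_filter_le _ _
    have h0 : (0:ℝ) ≤ (n.divisors.card : ℝ) := by positivity
    calc ((n.divisors.filter (fun d : ℕ =>
          x ^ ((1 : ℝ) / 200) ≤ (d : ℝ) ∧ (d : ℝ) ≤ x ^ ((1 : ℝ) / 100))).card : ℝ) / n
        ≤ (((n.divisors.card : ℝ))^2 / L) / n := by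
          gcongr
          rw [le_div_iff₀ hLpos]
          nlinarith
      _ = (1/L) * (((n.divisors.card : ℝ))^2 / n) := by ring
  calc ∑ n ∈ ((Finset.Icc 1 N).filter
          (fun n : ℕ => x ^ ((1 : ℝ) / 19) ≤ (n : ℝ) ∧ L ≤ (n.divisors.card : ℝ))),
        ((n.divisors.filter (fun d : ℕ =>
            x ^ ((1 : ℝ) / 200) ≤ (d : ℝ) ∧ (d : ℝ) ≤ x ^ ((1 : ℝ) / 100))).card : ℝ) / n
      ≤ ∑ n ∈ ((Finset.Icc 1 N).filter
          (fun n : ℕ => x ^ ((1 : ℝ) / 19) ≤ (n : ℝ) ∧ L ≤ (n.divisors.card : ℝ))),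
        (1/L) * (((n.divisors.card : ℝ))^2 / n) := Finset.sum_le_sum hterm
    _ = (1/L) * ∑ n ∈ ((Finset.Icc 1 N).filter
          (fun n : ℕ => x ^ ((1 : ℝ) / 19) ≤ (n : ℝ) ∧ L ≤ (n.divisors.card : ℝ))),
        (((n.divisors.card : ℝ))^2 / n) := by rw [Finset.mul_sum]
    _ ≤ (1/L) * ∑ n ∈ Finset.Icc 1 N, (((n.divisors.card : ℝ))^2 / n) := by
        refine mul_le_mul_of_nonneg_left ?_ (by positivity)
        exact Finset.sum_le_sum_of_subset_of_nonneg (Finset.filter_subset _ _)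
          (fun n _ _ => by positivity)
    _ ≤ (1/L) * (∑ m ∈ Icc 1 N, (1:ℝ)/m)^4 := by
        refine mul_le_mul_of_nonneg_left (le_trans (tau_sq_sum_aux N) ?_) (by positivity)
        exact le_refl _
    _ ≤ (1/L) * (1 + Real.log N)^4 := by
        refine mul_le_mul_of_nonneg_left ?_ (by positivity)
        exact pow_le_pow_left₀ (harm_nonneg_aux N) (harm_le_aux N) 4
    _ ≤ 1 * Real.log x := by
        have h1 : (1:ℝ) + Real.log N ≤ (1/5) * Real.log x := by
          have : (1:ℝ) ≤ (1/10) * Real.log x := by linarith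
          linarith
        have h2 : ((1:ℝ) + Real.log N)^4 ≤ ((1/5) * Real.log x)^4 := by
          apply pow_le_pow_left₀ ?_ h1
          have : (0:ℝ) ≤ Real.log N := Real.log_natCast_nonneg N
          linarith
        rw [one_mul, one_div, inv_mul_le_iff₀ hLpos]
        calc ((1:ℝ) + Real.log N)^4 ≤ ((1/5) * Real.log x)^4 := h2
          _ = (1/625) * L := by rw [hL]; ring
          _ ≤ L * Real.log x := by nlinarith
end

section
/- There exist constants C > 0 and x₀ such that for all real x ≥ x₀: ∑ 1/d ≤ C, where the sum is over all positive integers d with x^{1/200} ≤ d ≤ x^{1/10} and τ(d) ≥ (log x)². -/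
/-!
Writing `τ(d) / d = ∑_{ab = d} 1 / (ab)` shows `∑_{d ≤ N} τ(d) / d ≤ H_N²`, where the
harmonic number `H_N` is at most `1 + log N`. Hence, by Markov's inequality, the `d ≤ N` with
`τ(d) ≥ T` have `∑ 1 / d ≤ H_N² / T`. For `N = ⌊x^{1/10}⌋` and `T = (log x)²` this is at most
`(1 + (log x) / 10)² / (log x)² ≤ 1` as soon as `log x ≥ 2`.
-/

open Finset ArithmeticFunction

noncomputable def reciprocal : ArithmeticFunction ℝ := ⟨fun n => (n : ℝ)⁻¹, by simp⟩

@[simp]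
lemma reciprocal_apply (n : ℕ) : reciprocal n = (n : ℝ)⁻¹ := rfl

lemma reciprocal_mul_reciprocal_apply (n : ℕ) :
    (reciprocal * reciprocal) n = #n.divisors / n := by
  rw [mul_apply, Nat.sum_divisorsAntidiagonal (fun a b => reciprocal a * reciprocal b),
    div_eq_mul_inv, ← nsmul_eq_mul, ← sum_const]
  refine sum_congr rfl fun d hd => ?_
  rw [reciprocal_apply, reciprocal_apply, ← mul_inv, ← Nat.cast_mul,
    Nat.mul_div_cancel' (Nat.dvd_of_mem_divisors hd)]

lemma sum_card_divisors_div_le_harmonic_sq (N : ℕ) :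
    ∑ d ∈ Icc 1 N, (#d.divisors : ℝ) / d ≤ (harmonic N : ℝ) ^ 2 := by
  have hIcc : Icc 1 N = Ioc 0 N := Icc_add_one_left_eq_Ioc 0 N
  simp_rw [← reciprocal_mul_reciprocal_apply, hIcc, sum_Ioc_mul_eq_sum_prod_filter,
    harmonic_eq_sum_Icc, hIcc]
  push_cast
  rw [sq, sum_mul_sum, ← sum_product']
  exact sum_le_sum_of_subset_of_nonneg (filter_subset _ _) fun x _ _ => by
    simp only [reciprocal_apply]; positivity

lemma sum_inv_le_harmonic_sq_div {N : ℕ} {S : Finset ℕ} (hS : S ⊆ Icc 1 N) {T : ℝ}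
    (hT : 0 < T) (hτ : ∀ d ∈ S, T ≤ #d.divisors) :
    ∑ d ∈ S, (1 : ℝ) / d ≤ harmonic N ^ 2 / T := by
  rw [le_div_iff₀' hT, mul_sum]
  calc ∑ d ∈ S, T * (1 / d) ≤ ∑ d ∈ S, (#d.divisors : ℝ) / d :=
        sum_le_sum fun d hd => by rw [mul_one_div]; gcongr; exact hτ d hd
    _ ≤ ∑ d ∈ Icc 1 N, (#d.divisors : ℝ) / d :=
        sum_le_sum_of_subset_of_nonneg hS fun _ _ _ => by positivity
    _ ≤ harmonic N ^ 2 := sum_card_divisors_div_le_harmonic_sq N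

/-- `∑ 1/d = O(1)`, where the sum is over `d ∈ [x^{1/200}, x^{1/10}]` with
`τ(d) ≥ (log x)²`. -/
theorem sum_inv_large_tau_bounded :
    ∃ C : ℝ, 0 < C ∧ ∃ x₀ : ℝ, ∀ x : ℝ, x₀ ≤ x →
      ∑ d ∈ ((Finset.Icc 1 ⌊x ^ ((1 : ℝ) / 10)⌋₊).filter
          (fun d : ℕ => x ^ ((1 : ℝ) / 200) ≤ (d : ℝ) ∧
            (Real.log x) ^ 2 ≤ (d.divisors.card : ℝ))),
        (1 : ℝ) / (d : ℝ) ≤ C := by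
  refine ⟨1, one_pos, Real.exp 2, fun x hx => ?_⟩
  have hx0 : 0 < x := (Real.exp_pos 2).trans_le hx
  have hlog : 2 ≤ Real.log x := (Real.le_log_iff_exp_le hx0).2 hx
  have hH : (harmonic ⌊x ^ ((1 : ℝ) / 10)⌋₊ : ℝ) ≤ Real.log x := by
    have hx1 : 1 ≤ x := (Real.one_le_exp (by norm_num)).trans hx
    have hH' := harmonic_floor_le_one_add_log _
      (Real.one_le_rpow hx1 (by norm_num : (0 : ℝ) ≤ 1 / 10))
    rw [Real.log_rpow hx0] at hH'
    linarith
  calc _ ≤ (harmonic ⌊x ^ ((1 : ℝ) / 10)⌋₊ : ℝ) ^ 2 / Real.log x ^ 2 :=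
        sum_inv_le_harmonic_sq_div (filter_subset _ _) (by positivity) fun d hd =>
          (mem_filter.1 hd).2.2
    _ ≤ 1 := by
        rw [div_le_one (by positivity)]
        exact pow_le_pow_left₀ (Rat.cast_nonneg.2 (by unfold harmonic; positivity)) hH 2
end
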